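/- arXiv:1609.07020 — 4 statements merged into one kernel-verified Lean document; each statement's English description precedes it below -/
import Mathlib

section
/- (Level-set lemma) Let U ⊂ Λ ⊂ R^d be measurable with |Λ| = 1 and |U| > 0. Let p ∈ [1,∞], f ∈ L^p(Λ), C, α ∈ [1,∞), Q ∈ [0,∞). Set ε = (C/(1+C))|U| and W = {x ∈ Λ : |f(x)| + Q < (ε/C)^α ‖f‖_{L^p(Λ)}}. Assume sup_{x∈U} |f(x)| + Q ≥ (|U|/C)^α ‖f‖_{L^p(Λ)} and sup_{x∈W} |f(x)| + Q ≥ (|W|/C)^α ‖f‖_{L^p(Λ)}. Then |W| ≤ ε, and for every q with 1 ≤ q ≤ p, q < ∞: ∫_U (|f(x)| + Q)^q dx ≥ (|U|/(1+C))^{qα + 1} ‖f‖_{L^q(Λ)}^q. -/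
/-!
Every point of `W` lies below the threshold `(ε/C)^α N` (where `N = ‖f‖_p`), so the supremum
over `W` does too, and the hypothesis on `W` forces `|W| ≤ ε` by monotonicity of `t ↦ (t/C)^α`. Since `ε / C = |U| - ε =
|U|/(1+C) =: δ`, the function `|f| + Q` is at least `δ^α N` on `U \ W`, a set of measure at least
`δ`; Markov's inequality gives `∫_U (|f| + Q)^q ≥ δ^{qα+1} N^q`, and `N^q` dominates `∫_Λ |f|^q`
because `‖f‖_q ≤ ‖f‖_p` on the probability space `Λ`.
-/

open MeasureTheory ENNReal

section

variable {X : Type*} [MeasurableSpace X] {μ : Measure X}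

theorem measure_le_ofReal_of_lt_of_le_biSup {W : Set X} {g : X → ℝ} {b C α N : ℝ}
    (hg : ∀ x, 0 ≤ g x) (hW : μ W ≠ ∞) (hb : 0 ≤ b) (hC : 0 < C) (hα : 0 < α)
    (hlt : ∀ x ∈ W, g x < (b / C) ^ α * N)
    (hsup : ((μ W).toReal / C) ^ α * N ≤ ⨆ x ∈ W, g x) :
    μ W ≤ ENNReal.ofReal b := by
  rcases W.eq_empty_or_nonempty with rfl | ⟨x₀, hx₀⟩
  · simp
  have hN : 0 < N := pos_of_mul_pos_right ((hg x₀).trans_lt (hlt x₀ hx₀)) (by positivity)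
  have hsup_le : ⨆ x ∈ W, g x ≤ (b / C) ^ α * N :=
    Real.iSup_le (fun x => Real.iSup_le (fun hx => (hlt x hx).le) (by positivity)) (by positivity)
  have hpow : ((μ W).toReal / C) ^ α ≤ (b / C) ^ α :=
    le_of_mul_le_mul_right (hsup.trans hsup_le) hN
  rw [Real.rpow_le_rpow_iff (by positivity) (by positivity) hα,
    div_le_div_iff_of_pos_right hC] at hpow
  exact (ENNReal.le_ofReal_iff_toReal_le hW hb).2 hpow

theorem mul_sub_le_setIntegral_of_le_on_diff {U W : Set X} {h : X → ℝ} {s ε : ℝ}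
    (hU : MeasurableSet U) (hUfin : μ U ≠ ∞) (hε : 0 ≤ ε) (hW : μ W ≤ ENNReal.ofReal ε)
    (hs : 0 ≤ s) (h0 : ∀ x ∈ U, 0 ≤ h x) (hint : IntegrableOn h U μ)
    (hle : ∀ x ∈ U \ W, s ≤ h x) :
    s * ((μ U).toReal - ε) ≤ ∫ x in U, h x ∂μ := by
  have hdiff : μ (U \ W) ≠ ∞ := ne_top_of_le_ne_top hUfin (measure_mono Set.sdiff_subset)
  have hmeas : (μ U).toReal - ε ≤ (μ.restrict U).real {x | s ≤ h x} :=
    calc (μ U).toReal - ε = (μ U).toReal - (ENNReal.ofReal ε).toReal := by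
          rw [toReal_ofReal hε]
      _ ≤ (μ U - ENNReal.ofReal ε).toReal := le_toReal_sub ofReal_ne_top
      _ ≤ (μ (U \ W)).toReal := toReal_mono hdiff ((tsub_le_tsub_left hW _).trans le_measure_sdiff)
      _ ≤ (μ.restrict U).real {x | s ≤ h x} := by
          rw [measureReal_def, Measure.restrict_apply' hU]
          exact toReal_mono (ne_top_of_le_ne_top hUfin (measure_mono Set.inter_subset_right))
            (measure_mono fun x hx => ⟨hle x hx, hx.1⟩)
  calc s * ((μ U).toReal - ε) ≤ s * (μ.restrict U).real {x | s ≤ h x} :=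
        mul_le_mul_of_nonneg_left hmeas hs
    _ ≤ ∫ x in U, h x ∂μ :=
        mul_meas_ge_le_integral_of_nonneg ((ae_restrict_iff' hU).2 (ae_of_all _ h0)) hint s

variable {E : Type*} [NormedAddCommGroup E]

theorem integral_norm_rpow_le_toReal_eLpNorm_rpow [IsProbabilityMeasure μ] {f : X → E}
    {p : ℝ≥0∞} {q : ℝ} (hq : 0 < q) (hqp : ENNReal.ofReal q ≤ p) (hf : MemLp f p μ) :
    ∫ x, ‖f x‖ ^ q ∂μ ≤ (eLpNorm f p μ).toReal ^ q := by
  have hfq : MemLp f (ENNReal.ofReal q) μ := hf.mono_exponent hqp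
  have hI0 : 0 ≤ ∫ x, ‖f x‖ ^ q ∂μ := integral_nonneg fun x => by positivity
  calc ∫ x, ‖f x‖ ^ q ∂μ = (eLpNorm f (ENNReal.ofReal q) μ).toReal ^ q := by
        rw [hfq.eLpNorm_eq_integral_rpow_norm (by simpa using hq) ofReal_ne_top,
          toReal_ofReal hq.le, toReal_ofReal (by positivity), ← Real.rpow_mul hI0,
          inv_mul_cancel₀ hq.ne', Real.rpow_one]
    _ ≤ (eLpNorm f p μ).toReal ^ q :=
        Real.rpow_le_rpow toReal_nonneg (toReal_mono hf.2.ne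
          (eLpNorm_le_eLpNorm_of_exponent_le hqp hf.aestronglyMeasurable)) hq.le

theorem integrable_norm_add_const_rpow [IsFiniteMeasure μ] {f : X → E} {q Q : ℝ}
    (hq : 0 < q) (hQ : 0 ≤ Q) (hf : MemLp f (ENNReal.ofReal q) μ) :
    Integrable (fun x => (‖f x‖ + Q) ^ q) μ := by
  have hF := (hf.norm.add (memLp_const Q)).integrable_norm_rpow (by simpa using hq)
    ofReal_ne_top
  rw [toReal_ofReal hq.le] at hF
  refine hF.congr (ae_of_all _ fun x => ?_)
  simp only [Pi.add_apply, Real.norm_of_nonneg (by positivity : 0 ≤ ‖f x‖ + Q)]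

end

theorem stmt_3_general (d : ℕ) (Λ U : Set (Fin d → ℝ)) (hUΛ : U ⊆ Λ)
    (hUm : MeasurableSet U)
    (hΛ1 : volume Λ = 1)
    (p : ℝ≥0∞) (f : (Fin d → ℝ) → ℂ)
    (hf : MemLp f p (volume.restrict Λ))
    (C α Q : ℝ) (hC : 1 ≤ C) (hα : 1 ≤ α) (hQ : 0 ≤ Q) :
    let N := (eLpNorm f p (volume.restrict Λ)).toReal
    let ε := C / (1 + C) * (volume U).toReal
    let W := {x ∈ Λ | ‖f x‖ + Q < (ε / C) ^ α * N}
    (⨆ x ∈ U, (‖f x‖ + Q)) ≥ ((volume U).toReal / C) ^ α * N →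
    (⨆ x ∈ W, (‖f x‖ + Q)) ≥ ((volume W).toReal / C) ^ α * N →
    volume W ≤ ENNReal.ofReal ε ∧
      ∀ q : ℝ, 1 ≤ q → ENNReal.ofReal q ≤ p →
        (∫ x in U, (‖f x‖ + Q) ^ q) ≥
          ((volume U).toReal / (1 + C)) ^ (q * α + 1) * ∫ x in Λ, ‖f x‖ ^ q := by
  intro N ε W _ hsupW
  have hC0 : 0 < C := by linarith
  have hΛfin : volume Λ ≠ ∞ := by simp [hΛ1]
  have hUfin : volume U ≠ ∞ := ne_top_of_le_ne_top hΛfin (measure_mono hUΛ)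
  set δ := (volume U).toReal / (1 + C)
  have hεδ : ε / C = δ := by simp only [ε, δ]; field_simp
  have hUε : (volume U).toReal - ε = δ := by simp only [ε, δ]; field_simp; ring
  have hWε : volume W ≤ ENNReal.ofReal ε :=
    measure_le_ofReal_of_lt_of_le_biSup (fun x => by positivity)
      (ne_top_of_le_ne_top hΛfin (measure_mono fun x hx => hx.1)) (by positivity) hC0
      (by linarith) (fun x hx => hx.2) hsupW
  refine ⟨hWε, fun q hq hqp => ?_⟩
  have : IsProbabilityMeasure (volume.restrict Λ) := ⟨by simp [hΛ1]⟩
  have hq0 : 0 < q := by linarith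
  have hδ0 : 0 ≤ δ := by positivity
  have hint : IntegrableOn (fun x => (‖f x‖ + Q) ^ q) U :=
    (integrable_norm_add_const_rpow hq0 hQ (hf.mono_exponent hqp)).mono_measure
      (Measure.restrict_mono hUΛ le_rfl)
  have hlarge : ∀ x ∈ U \ W, (δ ^ α * N) ^ q ≤ (‖f x‖ + Q) ^ q := fun x hx =>
    Real.rpow_le_rpow (by positivity)
      (by rw [← hεδ]; exact not_lt.1 fun h => hx.2 ⟨hUΛ hx.1, h⟩) hq0.le
  calc δ ^ (q * α + 1) * ∫ x in Λ, ‖f x‖ ^ q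
      ≤ δ ^ (q * α + 1) * N ^ q := by
        gcongr; exact integral_norm_rpow_le_toReal_eLpNorm_rpow hq0 hqp hf
    _ = (δ ^ α * N) ^ q * ((volume U).toReal - ε) := by
        rw [Real.rpow_add' hδ0 (by positivity), Real.mul_rpow (by positivity) toReal_nonneg,
          ← Real.rpow_mul hδ0, Real.rpow_one, hUε, mul_comm α q]
        ring
    _ ≤ ∫ x in U, (‖f x‖ + Q) ^ q :=
        mul_sub_le_setIntegral_of_le_on_diff hUm hUfin (by positivity) hWε (by positivity)
          (fun x _ => by positivity) hint hlarge

/-- Level-set lemma: `U ⊆ Λ ⊆ ℝ^d` measurable, `|Λ| = 1`, `|U| > 0`, `f ∈ L^p(Λ)`,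
`C, α ≥ 1`, `Q ≥ 0`, `ε = C/(1+C)·|U|`,
`W = {x ∈ Λ : |f(x)| + Q < (ε/C)^α ‖f‖_{L^p(Λ)}}`. If
`sup_U (|f|+Q) ≥ (|U|/C)^α ‖f‖_{L^p(Λ)}` and `sup_W (|f|+Q) ≥ (|W|/C)^α ‖f‖_{L^p(Λ)}`,
then `|W| ≤ ε` and `∫_U (|f|+Q)^q ≥ (|U|/(1+C))^{qα+1} ‖f‖_{L^q(Λ)}^q` for `1 ≤ q ≤ p`,
`q < ∞`. -/
theorem stmt_3 (d : ℕ) (Λ U : Set (Fin d → ℝ)) (hUΛ : U ⊆ Λ)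
    (hΛm : MeasurableSet Λ) (hUm : MeasurableSet U)
    (hΛ1 : volume Λ = 1) (hU0 : 0 < volume U)
    (p : ℝ≥0∞) (hp : 1 ≤ p) (f : (Fin d → ℝ) → ℂ)
    (hf : MemLp f p (volume.restrict Λ))
    (C α Q : ℝ) (hC : 1 ≤ C) (hα : 1 ≤ α) (hQ : 0 ≤ Q) :
    let N := (eLpNorm f p (volume.restrict Λ)).toReal
    let ε := C / (1 + C) * (volume U).toReal
    let W := {x ∈ Λ | ‖f x‖ + Q < (ε / C) ^ α * N}
    (⨆ x ∈ U, (‖f x‖ + Q)) ≥ ((volume U).toReal / C) ^ α * N →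
    (⨆ x ∈ W, (‖f x‖ + Q)) ≥ ((volume W).toReal / C) ^ α * N →
    volume W ≤ ENNReal.ofReal ε ∧
      ∀ q : ℝ, 1 ≤ q → ENNReal.ofReal q ≤ p →
        (∫ x in U, (‖f x‖ + Q) ^ q) ≥
          ((volume U).toReal / (1 + C)) ^ (q * α + 1) * ∫ x in Λ, ‖f x‖ ^ q :=
  stmt_3_general d Λ U hUΛ hUm hΛ1 p f hf C α Q hC hα hQ
end

section
/- (Probabilistic line-segment selection) Let Λ ⊂ R^d be a cube of unit side length, S ⊂ R^d measurable, and y ∈ Λ. Then there exists a direction η ∈ S^{d-1} such that the maximal line segment I = {y + rη : r ≥ 0} ∩ Λ satisfies |S ∩ I| / |I| ≥ |S ∩ Λ| / (σ_{d-1} d^{d/2}), where |S ∩ I| and |I| denote one-dimensional Lebesgue (length) measure along the segment and σ_{d-1} is the surface measure of the unit sphere S^{d-1} ⊂ R^d. -/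
/-!
Translate `y` to the origin and write the Lebesgue measure in polar coordinates: `μ` is the
product of the surface measure `σ` on the unit sphere and `r ^ (d - 1) dr` on `(0, ∞)`. Since
`S ∩ Λ` lies in the ball of radius `√d` around `y`, the radial factor is at most `√d ^ (d - 1)`,
so `|S ∩ Λ| ≤ √d ^ (d - 1) ∫ |{t > 0 : y + tη ∈ S ∩ Λ}| dσ(η)`. Some direction `η` does at least
as well as the average over the sphere, and the segment in direction `η` has length `ρ ≤ √d`.
-/

open MeasureTheory Set Metric

theorem abs_le_of_smul_mem_closedBall {E : Type*} [NormedAddCommGroup E] [NormedSpace ℝ E]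
    {η : E} (hη : ‖η‖ = 1) {t R : ℝ} (h : t • η ∈ closedBall 0 R) : |t| ≤ R := by
  simpa [norm_smul, hη] using h

theorem EuclideanSpace.dist_le_sqrt_card {ι : Type*} [Fintype ι] {x y : EuclideanSpace ℝ ι}
    (h : ∀ i, dist (x i) (y i) ≤ 1) : dist x y ≤ √(Fintype.card ι) := by
  rw [EuclideanSpace.dist_eq]
  gcongr
  calc ∑ i, dist (x i) (y i) ^ 2 ≤ ∑ _i : ι, (1 : ℝ) := by
        gcongr with i; exact pow_le_one₀ dist_nonneg (h i)
    _ = Fintype.card ι := by simp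

theorem ENNReal.toReal_div_mul_le_toReal_div {a b V : ENNReal} {ρ R : ℝ} (hb : b ≠ ⊤)
    (ha : a ≤ b * V) (hV : V ≤ ENNReal.ofReal ρ) (hρR : ρ ≤ R) :
    a.toReal / (b.toReal * R) ≤ V.toReal / ρ := by
  rcases le_or_gt ρ 0 with hρ | hρ
  · have hV0 : V = 0 := by simpa [ENNReal.ofReal_eq_zero.2 hρ] using hV
    have ha0 : a = 0 := by simpa [hV0] using ha
    simp [ha0, hV0]
  have hR : 0 < R := hρ.trans_le hρR
  have hVfin : V ≠ ⊤ := ne_top_of_le_ne_top ENNReal.ofReal_ne_top hV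
  have ha' : a.toReal ≤ b.toReal * V.toReal := by
    simpa using ENNReal.toReal_mono (ENNReal.mul_ne_top hb hVfin) ha
  calc a.toReal / (b.toReal * R) ≤ b.toReal * V.toReal / (b.toReal * R) := by gcongr
    _ ≤ V.toReal / R := by
        rcases eq_or_ne b.toReal 0 with h | h
        · simp only [h, zero_mul, zero_div]; positivity
        · rw [mul_div_mul_left _ _ h]
    _ ≤ V.toReal / ρ := by gcongr

namespace MeasureTheory.Measure

theorem volumeIoiPow_preimage_le {U : Set ℝ} (hU : MeasurableSet U) {R : ℝ} (hUR : U ⊆ Iic R)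
    (n : ℕ) :
    volumeIoiPow n (Subtype.val ⁻¹' U) ≤ ENNReal.ofReal (R ^ n) * volume (Ioi 0 ∩ U) := by
  rw [volumeIoiPow, withDensity_apply _ (measurable_subtype_coe hU),
    setLIntegral_subtype measurableSet_Ioi _ fun t : ℝ ↦ ENNReal.ofReal (t ^ n),
    Subtype.image_preimage_coe, ← setLIntegral_const]
  refine setLIntegral_mono' (measurableSet_Ioi.inter hU) fun t ht ↦ ?_
  exact ENNReal.ofReal_le_ofReal (pow_le_pow_left₀ (le_of_lt ht.1) (hUR ht.2) n)

variable {E : Type*} [NormedAddCommGroup E] [NormedSpace ℝ E] [MeasurableSpace E]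
  [BorelSpace E] [FiniteDimensional ℝ E] [Nontrivial E] (μ : Measure E) [μ.IsAddHaarMeasure]

theorem measure_eq_lintegral_toSphere_volumeIoiPow {A : Set E} (hA : MeasurableSet A) :
    μ A = ∫⁻ η : sphere (0 : E) 1,
      volumeIoiPow (Module.finrank ℝ E - 1) (Subtype.val ⁻¹' {t : ℝ | t • (η : E) ∈ A})
        ∂μ.toSphere := by
  set e := homeomorphUnitSphereProd E
  have hA' : MeasurableSet (e.symm ⁻¹' (Subtype.val ⁻¹' A)) :=
    e.symm.measurable (measurable_subtype_coe hA)
  calc μ A = μ.comap Subtype.val (Subtype.val ⁻¹' A : Set ({0}ᶜ : Set E)) := by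
        rw [comap_subtype_coe_apply (measurableSet_singleton 0).compl, Subtype.image_preimage_coe,
          ← sdiff_eq_compl_inter, measure_sdiff_null (measure_singleton 0)]
    _ = μ.toSphere.prod (volumeIoiPow _) (e.symm ⁻¹' (Subtype.val ⁻¹' A)) := by
        rw [← (measurePreserving_homeomorphUnitSphereProd μ).measure_preimage hA'.nullMeasurableSet,
          ← preimage_comp, e.symm_comp_self, preimage_id]
    _ = _ := Measure.prod_apply hA'

theorem measure_le_pow_mul_lintegral_toSphere {A : Set E} (hA : MeasurableSet A) {R : ℝ}
    (hAR : A ⊆ closedBall 0 R) :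
    μ A ≤ ENNReal.ofReal (R ^ (Module.finrank ℝ E - 1)) *
      ∫⁻ η : sphere (0 : E) 1, volume (Ioi 0 ∩ {t : ℝ | t • (η : E) ∈ A}) ∂μ.toSphere := by
  rw [measure_eq_lintegral_toSphere_volumeIoiPow μ hA,
    ← lintegral_const_mul' _ _ ENNReal.ofReal_ne_top]
  refine lintegral_mono fun η ↦
    volumeIoiPow_preimage_le (measurable_smul_const _ hA) (fun t ht ↦ ?_) _
  exact (le_abs_self t).trans (abs_le_of_smul_mem_closedBall (norm_eq_of_mem_sphere η) (hAR ht))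

theorem exists_measure_le_mul_volume_ray {A : Set E} (hA : MeasurableSet A) {R : ℝ}
    (hAR : A ⊆ closedBall 0 R) :
    ∃ η : sphere (0 : E) 1, μ A ≤ ENNReal.ofReal (R ^ (Module.finrank ℝ E - 1)) *
      μ.toSphere univ * volume (Ioi 0 ∩ {t : ℝ | t • (η : E) ∈ A}) := by
  set g : sphere (0 : E) 1 → ENNReal := fun η ↦ volume (Ioi 0 ∩ {t : ℝ | t • (η : E) ∈ A})
  have hg_le : ∀ η, g η ≤ ENNReal.ofReal R := fun η ↦ by
    refine (measure_mono (t := Ioc 0 R) fun t ht ↦ ⟨ht.1, ?_⟩).trans_eq (by simp)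
    exact (le_abs_self t).trans (abs_le_of_smul_mem_closedBall (norm_eq_of_mem_sphere η) (hAR ht.2))
  obtain ⟨η, hη⟩ := exists_laverage_le (toSphere_ne_zero μ) <| ne_of_lt <|
    (lintegral_mono hg_le).trans_lt <| by
      rw [lintegral_const]; exact ENNReal.mul_lt_top ENNReal.ofReal_lt_top (measure_lt_top _ _)
  refine ⟨η, (measure_le_pow_mul_lintegral_toSphere μ hA hAR).trans ?_⟩
  rw [← measure_mul_laverage, mul_assoc]
  gcongr

theorem exists_measure_le_mul_volume_segment (y : E) {B : Set E} (hB : MeasurableSet B) {R : ℝ}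
    (hBR : B ⊆ closedBall y R) :
    ∃ η : sphere (0 : E) 1, μ B ≤ ENNReal.ofReal (R ^ (Module.finrank ℝ E - 1)) *
      μ.toSphere univ * volume (Ioi 0 ∩ {t : ℝ | y + t • (η : E) ∈ B}) := by
  have hAR : (y + ·) ⁻¹' B ⊆ closedBall 0 R := fun x hx ↦ by
    simpa [mem_closedBall_iff_norm] using hBR hx
  rw [← measure_preimage_add μ y B]
  exact exists_measure_le_mul_volume_ray μ (hB.preimage (measurable_const_add y)) hAR

end MeasureTheory.Measure

/-- Probabilistic line-segment selection: for a unit cube `Λ ⊂ ℝ^d`, a measurable `S` and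
`y ∈ Λ`, there is a direction `η ∈ S^{d-1}` such that the maximal segment
`I = {y + tη : 0 ≤ t ≤ ρ} ⊆ Λ` satisfies `|S ∩ I|/|I| ≥ |S ∩ Λ|/(σ_{d-1} d^{d/2})`,
where `σ_{d-1} = d·ω_d` is the surface measure of the unit sphere. -/
theorem stmt_5 (d : ℕ) (hd : 1 ≤ d) (r : Fin d → ℝ)
    (S : Set (EuclideanSpace ℝ (Fin d))) (hS : MeasurableSet S)
    (y : EuclideanSpace ℝ (Fin d))
    (hy : y ∈ {x : EuclideanSpace ℝ (Fin d) | ∀ i, x i ∈ Set.Icc (r i) (r i + 1)}) :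
    ∃ η : EuclideanSpace ℝ (Fin d), ‖η‖ = 1 ∧
      ∀ ρ : ℝ,
        IsGreatest {t : ℝ | 0 ≤ t ∧
            y + t • η ∈ {x : EuclideanSpace ℝ (Fin d) | ∀ i, x i ∈ Set.Icc (r i) (r i + 1)}} ρ →
          (volume {t : ℝ | t ∈ Set.Icc 0 ρ ∧ y + t • η ∈ S}).toReal / ρ ≥
            (volume (S ∩ {x : EuclideanSpace ℝ (Fin d) | ∀ i, x i ∈ Set.Icc (r i) (r i + 1)})).toReal /
              ((d * (volume (Metric.ball (0 : EuclideanSpace ℝ (Fin d)) 1)).toReal) *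
                Real.sqrt d ^ d) := by
  set Λ : Set (EuclideanSpace ℝ (Fin d)) := {x | ∀ i, x i ∈ Icc (r i) (r i + 1)}
  have hΛ : MeasurableSet Λ := by measurability
  have hΛy : Λ ⊆ closedBall y √d := fun x hx ↦ mem_closedBall.2 <|
    (EuclideanSpace.dist_le_sqrt_card fun i ↦ by
      simpa using Real.dist_le_of_mem_Icc (hx i) (hy i)).trans_eq (by simp)
  have : Nonempty (Fin d) := ⟨⟨0, hd⟩⟩
  obtain ⟨η, hη⟩ := Measure.exists_measure_le_mul_volume_segment volume y (hS.inter hΛ)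
    (inter_subset_right.trans hΛy)
  refine ⟨η, norm_eq_of_mem_sphere η, fun ρ hρ ↦ ?_⟩
  have hρR : ρ ≤ √d := (le_abs_self ρ).trans <|
    abs_le_of_smul_mem_closedBall (norm_eq_of_mem_sphere η) (by simpa using hΛy hρ.1.2)
  have hseg : volume (Ioi 0 ∩ {t : ℝ | y + t • η.1 ∈ S ∩ Λ}) ≤
      volume {t : ℝ | t ∈ Icc 0 ρ ∧ y + t • η.1 ∈ S} :=
    measure_mono fun t ht ↦ ⟨⟨ht.1.le, hρ.2 ⟨ht.1.le, ht.2.2⟩⟩, ht.2.1⟩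
  have hV : volume {t : ℝ | t ∈ Icc 0 ρ ∧ y + t • η.1 ∈ S} ≤ ENNReal.ofReal ρ :=
    (measure_mono fun t ht ↦ ht.1).trans_eq (by simp)
  rw [Measure.toSphere_apply_univ, finrank_euclideanSpace_fin] at hη
  convert ENNReal.toReal_div_mul_le_toReal_div (by finiteness)
    (hη.trans (mul_le_mul_right hseg _)) hV hρR using 2
  rw [ENNReal.toReal_mul, ENNReal.toReal_ofReal (by positivity), ENNReal.toReal_mul,
    ENNReal.toReal_natCast, ← pow_sub_one_mul (by omega)]
  ring
end

section
/- (Good point in a good cube) Let Λ ⊂ R^d be a unit cube, p ∈ [1,∞), f ∈ L^p(Λ) smooth, and suppose that for all multi-indices α ≠ 0: ‖∂^α f‖_{L^p(Λ)} < 2^{2d/p} 3^{|α|} (C_B b)^α ‖f‖_{L^p(Λ)} with ‖f‖_{L^p(Λ)} > 0. Then there exists x ∈ Λ such that for ALL α ∈ N_0^d: |∂^α f(x)| ≤ 2^{3d/p} 9^{|α|} (C_B b)^α ‖f‖_{L^p(Λ)}. -/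
open MeasureTheory Real
open scoped ENNReal

/-- Directional derivative along the `i`-th coordinate. -/
noncomputable def coordDeriv {d : ℕ} (i : Fin d) (g : (Fin d → ℝ) → ℂ) : (Fin d → ℝ) → ℂ :=
  fun x => fderiv ℝ g x (Pi.single i 1)

/-- Multi-index partial derivative `∂^α`. -/
noncomputable def mderiv {d : ℕ} (α : Fin d → ℕ) (g : (Fin d → ℝ) → ℂ) : (Fin d → ℝ) → ℂ :=
  (List.finRange d).foldr (fun i h => (coordDeriv i)^[α i] h) g

/-- The axis-parallel unit cube with lower-left corner `r`. -/
def unitCube {d : ℕ} (r : Fin d → ℝ) : Set (Fin d → ℝ) :=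
  Set.univ.pi fun i => Set.Icc (r i) (r i + 1)

lemma contDiff_coordDeriv {d : ℕ} (i : Fin d) {g : (Fin d → ℝ) → ℂ} (hg : ContDiff ℝ (⊤ : ℕ∞) g) :
    ContDiff ℝ (⊤ : ℕ∞) (coordDeriv i g) :=
  (hg.fderiv_right (by simp)).clm_apply contDiff_const

lemma contDiff_iter {d : ℕ} (i : Fin d) (n : ℕ) {g : (Fin d → ℝ) → ℂ} (hg : ContDiff ℝ (⊤ : ℕ∞) g) :
    ContDiff ℝ (⊤ : ℕ∞) ((coordDeriv i)^[n] g) := by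
  induction n with
  | zero => exact hg
  | succ n ih => rw [Function.iterate_succ_apply']; exact contDiff_coordDeriv i ih

lemma contDiff_mderiv {d : ℕ} (α : Fin d → ℕ) {f : (Fin d → ℝ) → ℂ} (hf : ContDiff ℝ (⊤ : ℕ∞) f) :
    ContDiff ℝ (⊤ : ℕ∞) (mderiv α f) := by
  unfold mderiv
  induction (List.finRange d) with
  | nil => exact hf
  | cons i l ih => exact contDiff_iter i (α i) ih

lemma mderiv_zero {d : ℕ} (f : (Fin d → ℝ) → ℂ) : mderiv (0 : Fin d → ℕ) f = f := by
  unfold mderiv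
  induction (List.finRange d) with
  | nil => rfl
  | cons i l ih => simpa using ih

lemma tsum_pi_pow (d : ℕ) (q : ℝ≥0∞) :
    ∑' α : Fin d → ℕ, q ^ (∑ i, α i) = (∑' n : ℕ, q ^ n) ^ d := by
  induction d with
  | zero =>
    haveI : Unique (Fin 0 → ℕ) := ⟨⟨fun i => i.elim0⟩, fun f => funext fun i => i.elim0⟩
    rw [tsum_eq_single default (fun b hb => (hb (Subsingleton.elim b default)).elim)]
    simp
  | succ d ih =>
    rw [← (Fin.consEquiv (fun _ : Fin (d+1) => ℕ)).tsum_eq]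
    simp only [Fin.consEquiv_apply]
    rw [ENNReal.tsum_prod']
    simp only [Fin.sum_cons, pow_add]
    calc (∑' (a : ℕ) (v : Fin d → ℕ), q ^ a * q ^ (∑ i, v i))
        = ∑' (a : ℕ), q ^ a * ∑' (v : Fin d → ℕ), q ^ (∑ i, v i) := by
          congr 1; funext a; exact ENNReal.tsum_mul_left
      _ = (∑' n : ℕ, q ^ n) * ∑' (v : Fin d → ℕ), q ^ (∑ i, v i) := ENNReal.tsum_mul_right
      _ = (∑' n : ℕ, q ^ n) ^ d * (∑' n : ℕ, q ^ n) ^ 1 := by rw [ih, pow_one, mul_comm]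

lemma rpow_key (d : ℕ) (p : ℝ) (hp0 : 0 < p) (s : ℕ) (B : ℝ) (hB : 0 < B) :
    ((2:ℝ) ^ (2 * (d:ℝ) / p) * 3 ^ s * B) ^ p
      = ((2:ℝ) ^ (-(d:ℝ)) * ((3:ℝ) ^ (-p)) ^ s) * ((2:ℝ) ^ (3 * (d:ℝ) / p) * 9 ^ s * B) ^ p := by
  have h2 : (0:ℝ) < 2 := by norm_num
  have h3 : (0:ℝ) ≤ 3 := by norm_num
  have hKM : (2:ℝ) ^ (2 * (d:ℝ) / p) * 3 ^ s * B
      = ((2:ℝ) ^ (-(d:ℝ)/p) * ((3:ℝ) ^ (-(1:ℝ))) ^ s) * ((2:ℝ) ^ (3 * (d:ℝ) / p) * 9 ^ s * B) := by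
    rw [show (9:ℝ) ^ s = 3 ^ s * 3 ^ s by rw [← mul_pow]; norm_num]
    rw [show (2:ℝ) ^ (2 * (d:ℝ) / p) = 2 ^ (-(d:ℝ)/p) * 2 ^ (3 * (d:ℝ) / p) by
      rw [← Real.rpow_add h2]; congr 1; ring]
    rw [Real.rpow_neg_one, inv_pow]
    field_simp
  rw [hKM, Real.mul_rpow (by positivity) (by positivity)]
  congr 1
  rw [Real.mul_rpow (by positivity) (by positivity)]
  congr 1
  · rw [← Real.rpow_mul (le_of_lt h2)]
    congr 1
    field_simp
  · have l : ((3:ℝ) ^ (-(1:ℝ))) ^ (s:ℕ) = (3:ℝ) ^ (-(s:ℝ)) := by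
      rw [← Real.rpow_natCast ((3:ℝ) ^ (-(1:ℝ))) s, ← Real.rpow_mul h3]; congr 1; ring
    have r : ((3:ℝ) ^ (-p)) ^ (s:ℕ) = (3:ℝ) ^ (-(p * (s:ℝ))) := by
      rw [← Real.rpow_natCast ((3:ℝ) ^ (-p)) s, ← Real.rpow_mul h3]; congr 1; ring
    rw [l, r, ← Real.rpow_mul h3]
    congr 1; ring

/-- Good point in a good cube: if on a unit cube `Λ`,
`‖∂^α f‖_{L^p(Λ)} < 2^{2d/p} 3^{|α|} (C_B b)^α ‖f‖_{L^p(Λ)}` for all `α ≠ 0` and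
`‖f‖_{L^p(Λ)} > 0`, then there is `x ∈ Λ` with
`|∂^α f(x)| ≤ 2^{3d/p} 9^{|α|} (C_B b)^α ‖f‖_{L^p(Λ)}` for all `α`. -/
theorem stmt_10 (d : ℕ) (hd : 1 ≤ d) (r : Fin d → ℝ) (p : ℝ) (hp : 1 ≤ p)
    (f : (Fin d → ℝ) → ℂ) (hf : ContDiff ℝ (⊤ : ℕ∞) f)
    (b : Fin d → ℝ) (hb : ∀ j, 0 < b j) (C_B : ℝ) (hCB : 1 ≤ C_B)
    (hpos : 0 < ∫ x in unitCube r, ‖f x‖ ^ p)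
    (hgood : ∀ α : Fin d → ℕ, α ≠ 0 →
      (∫ x in unitCube r, ‖mderiv α f x‖ ^ p) <
        ((2 : ℝ) ^ (2 * (d : ℝ) / p) * 3 ^ (∑ i, α i) * ∏ i, (C_B * b i) ^ α i) ^ p *
          ∫ x in unitCube r, ‖f x‖ ^ p) :
    ∃ x ∈ unitCube r, ∀ α : Fin d → ℕ,
      ‖mderiv α f x‖ ≤
        (2 : ℝ) ^ (3 * (d : ℝ) / p) * 9 ^ (∑ i, α i) * (∏ i, (C_B * b i) ^ α i) *
          (∫ y in unitCube r, ‖f y‖ ^ p) ^ (1 / p) := by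
  have hp0 : (0:ℝ) < p := lt_of_lt_of_le one_pos hp
  have hp0' : p ≠ 0 := ne_of_gt hp0
  have hIpos : (0:ℝ) < ∫ x in unitCube r, ‖f x‖ ^ p := hpos
  set I : ℝ := ∫ x in unitCube r, ‖f x‖ ^ p with hIdef
  set J : ℝ≥0∞ := ENNReal.ofReal I with hJdef
  have hJ0 : J ≠ 0 := by
    simp only [hJdef, ne_eq, ENNReal.ofReal_eq_zero, not_le]
    exact hIpos
  have hJtop : J ≠ ⊤ := ENNReal.ofReal_ne_top
  have hcomp : IsCompact (unitCube r) := isCompact_univ_pi fun i => isCompact_Icc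
  have hvol : volume (unitCube r) = 1 := by
    unfold unitCube
    rw [volume_pi_pi]
    simp [Real.volume_Icc]
  have hcont : ∀ α : Fin d → ℕ, Continuous fun x => ‖mderiv α f x‖ ^ p :=
    fun α => ((contDiff_mderiv α hf).continuous.norm).rpow_const fun x => Or.inr hp0.le
  have hint : ∀ α : Fin d → ℕ, IntegrableOn (fun x => ‖mderiv α f x‖ ^ p) (unitCube r) :=
    fun α => ((hcont α).continuousOn).integrableOn_compact hcomp
  have hBpos : ∀ α : Fin d → ℕ, (0:ℝ) < ∏ i, (C_B * b i) ^ α i := fun α =>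
    Finset.prod_pos fun i _ => pow_pos (mul_pos (lt_of_lt_of_le one_pos hCB) (hb i)) _
  have hMpos : ∀ α : Fin d → ℕ,
      (0:ℝ) < (2:ℝ) ^ (3 * (d:ℝ)/p) * 9 ^ (∑ i, α i) * ∏ i, (C_B * b i) ^ α i := fun α =>
    mul_pos (mul_pos (Real.rpow_pos_of_pos (by norm_num) _) (pow_pos (by norm_num) _)) (hBpos α)
  by_contra hcon
  push_neg at hcon
  -- abbreviations
  set M : (Fin d → ℕ) → ℝ :=
    fun α => (2:ℝ) ^ (3 * (d:ℝ)/p) * 9 ^ (∑ i, α i) * ∏ i, (C_B * b i) ^ α i with hMdef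
  set F : (Fin d → ℕ) → (Fin d → ℝ) → ℝ≥0∞ :=
    fun α x => (ENNReal.ofReal (M α ^ p))⁻¹ * ENNReal.ofReal (‖mderiv α f x‖ ^ p) with hFdef
  have hMne : ∀ α, ENNReal.ofReal (M α ^ p) ≠ 0 := fun α => by
    simp only [ne_eq, ENNReal.ofReal_eq_zero, not_le]
    exact Real.rpow_pos_of_pos (hMpos α) p
  -- pointwise bound
  have hpt : ∀ x ∈ unitCube r, J ≤ ∑' α : Fin d → ℕ, F α x := by
    intro x hx
    obtain ⟨α, hα⟩ := hcon x hx
    refine le_trans ?_ (ENNReal.le_tsum α)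
    have hIp : (I ^ (1/p)) ^ p = I := by
      rw [← Real.rpow_mul (le_of_lt hIpos), one_div, inv_mul_cancel₀ hp0', Real.rpow_one]
    have hα' : M α * I ^ (1/p) < ‖mderiv α f x‖ := hα
    have h2 : M α ^ p * I ≤ ‖mderiv α f x‖ ^ p := by
      have h := Real.rpow_le_rpow
        (mul_nonneg (hMpos α).le (Real.rpow_nonneg hIpos.le _)) (le_of_lt hα') hp0.le
      rwa [Real.mul_rpow (hMpos α).le (Real.rpow_nonneg hIpos.le _), hIp] at h
    calc J = (ENNReal.ofReal (M α ^ p))⁻¹ * ENNReal.ofReal (M α ^ p * I) := by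
          rw [ENNReal.ofReal_mul (Real.rpow_nonneg (hMpos α).le _), ← mul_assoc,
            ENNReal.inv_mul_cancel (hMne α) ENNReal.ofReal_ne_top, one_mul]
      _ ≤ F α x := mul_le_mul_right (ENNReal.ofReal_le_ofReal h2) _
  -- measurability
  have hmeasF : ∀ α, Measurable (F α) := fun α =>
    ((hcont α).measurable.ennreal_ofReal).const_mul _
  -- integrate the pointwise bound
  have big : J ≤ ∑' α : Fin d → ℕ, ∫⁻ x in unitCube r, F α x := by
    have h0 : J = ∫⁻ _x in unitCube r, J ∂volume := by
      rw [setLIntegral_const, hvol, mul_one]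
    rw [h0, ← lintegral_tsum fun α => (hmeasF α).aemeasurable]
    exact setLIntegral_mono (Measurable.ennreal_tsum hmeasF) hpt
  -- per-α bound
  set q : ℝ≥0∞ := ENNReal.ofReal ((3:ℝ) ^ (-p)) with hqdef
  set c : ℝ≥0∞ := ENNReal.ofReal ((2:ℝ) ^ (-(d:ℝ))) with hcdef
  have hbound : ∀ α : Fin d → ℕ,
      (∫⁻ x in unitCube r, F α x) ≤ c * q ^ (∑ i, α i) * J := by
    intro α
    rw [hFdef]
    rw [lintegral_const_mul' _ _ (ENNReal.inv_ne_top.2 (hMne α))]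
    have h1 : (∫⁻ x in unitCube r, ENNReal.ofReal (‖mderiv α f x‖ ^ p))
        = ENNReal.ofReal (∫ x in unitCube r, ‖mderiv α f x‖ ^ p) :=
      (MeasureTheory.ofReal_integral_eq_lintegral_ofReal (hint α)
        (Filter.Eventually.of_forall fun x => by positivity)).symm
    rw [h1]
    have h2 : (∫ x in unitCube r, ‖mderiv α f x‖ ^ p)
        ≤ ((2:ℝ) ^ (2 * (d:ℝ)/p) * 3 ^ (∑ i, α i) * ∏ i, (C_B * b i) ^ α i) ^ p * I := by
      rcases eq_or_ne α 0 with h | h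
      · subst h
        rw [mderiv_zero]
        refine le_mul_of_one_le_left hIpos.le ?_
        refine Real.one_le_rpow ?_ hp0.le
        have h1' : (1:ℝ) ≤ (2:ℝ) ^ (2 * (d:ℝ)/p) :=
          Real.one_le_rpow (by norm_num) (by positivity)
        calc (1:ℝ) ≤ (2:ℝ) ^ (2 * (d:ℝ)/p) := h1'
          _ = (2:ℝ) ^ (2 * (d:ℝ)/p) * 3 ^ (∑ i, (0:Fin d → ℕ) i) * ∏ i, (C_B * b i) ^ (0:Fin d → ℕ) i := by
            simp
      · exact (hgood α h).le
    have h3 : ((2:ℝ) ^ (2 * (d:ℝ)/p) * 3 ^ (∑ i, α i) * ∏ i, (C_B * b i) ^ α i) ^ p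
        = ((2:ℝ) ^ (-(d:ℝ)) * ((3:ℝ) ^ (-p)) ^ (∑ i, α i)) * M α ^ p :=
      rpow_key d p hp0 _ _ (hBpos α)
    calc (ENNReal.ofReal (M α ^ p))⁻¹ * ENNReal.ofReal (∫ x in unitCube r, ‖mderiv α f x‖ ^ p)
        ≤ (ENNReal.ofReal (M α ^ p))⁻¹ *
            ENNReal.ofReal ((((2:ℝ) ^ (-(d:ℝ)) * ((3:ℝ) ^ (-p)) ^ (∑ i, α i)) * M α ^ p) * I) := by
          gcongr
          rw [← h3]
          exact h2
      _ = c * q ^ (∑ i, α i) * J := by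
          have hA : (0:ℝ) ≤ (2:ℝ) ^ (-(d:ℝ)) := Real.rpow_nonneg (by norm_num) _
          have hBs : (0:ℝ) ≤ ((3:ℝ) ^ (-p)) ^ (∑ i, α i) :=
            pow_nonneg (Real.rpow_nonneg (by norm_num) _) _
          have hMp : (0:ℝ) ≤ M α ^ p := Real.rpow_nonneg (hMpos α).le _
          rw [ENNReal.ofReal_mul (mul_nonneg (mul_nonneg hA hBs) hMp),
            ENNReal.ofReal_mul (mul_nonneg hA hBs),
            ENNReal.ofReal_mul hA,
            ENNReal.ofReal_pow (Real.rpow_nonneg (by norm_num) _)]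
          rw [show ((ENNReal.ofReal (M α ^ p))⁻¹ *
              (ENNReal.ofReal ((2:ℝ) ^ (-(d:ℝ))) * (ENNReal.ofReal ((3:ℝ) ^ (-p))) ^ (∑ i, α i) *
                ENNReal.ofReal (M α ^ p) * J))
              = ((ENNReal.ofReal (M α ^ p))⁻¹ * ENNReal.ofReal (M α ^ p)) *
                (ENNReal.ofReal ((2:ℝ) ^ (-(d:ℝ))) * (ENNReal.ofReal ((3:ℝ) ^ (-p))) ^ (∑ i, α i) * J)
            by ring]
          rw [ENNReal.inv_mul_cancel (hMne α) ENNReal.ofReal_ne_top, one_mul]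
  -- geometric sum bound
  have h3p1 : (3:ℝ) ^ (-p) ≤ 1/3 := by
    have : (3:ℝ) ^ (-p) ≤ (3:ℝ) ^ (-(1:ℝ)) :=
      Real.rpow_le_rpow_of_exponent_le (by norm_num) (by linarith)
    rwa [Real.rpow_neg_one, show ((3:ℝ)⁻¹ = 1/3) by norm_num] at this
  have hS : (∑' n : ℕ, q ^ n) ≤ ENNReal.ofReal (3/2) := by
    rw [ENNReal.tsum_geometric]
    have h1q : (1:ℝ≥0∞) - q = ENNReal.ofReal (1 - (3:ℝ) ^ (-p)) := by
      rw [hqdef, ← ENNReal.ofReal_one, ← ENNReal.ofReal_sub _ (Real.rpow_nonneg (by norm_num) _)]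
    rw [h1q, ← ENNReal.ofReal_inv_of_pos (by linarith)]
    refine ENNReal.ofReal_le_ofReal ?_
    rw [show (3:ℝ)/2 = (2/3:ℝ)⁻¹ by norm_num]
    exact inv_anti₀ (by norm_num) (by linarith)
  -- combine
  have hchain : J ≤ ENNReal.ofReal (3/4) * J := by
    calc J ≤ ∑' α : Fin d → ℕ, ∫⁻ x in unitCube r, F α x := big
      _ ≤ ∑' α : Fin d → ℕ, (c * q ^ (∑ i, α i) * J) := ENNReal.tsum_le_tsum hbound
      _ = (∑' α : Fin d → ℕ, q ^ (∑ i, α i)) * (c * J) := by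
          rw [← ENNReal.tsum_mul_right]
          congr 1; funext α; ring
      _ = (∑' n : ℕ, q ^ n) ^ d * (c * J) := by rw [tsum_pi_pow]
      _ ≤ (ENNReal.ofReal (3/2)) ^ d * (c * J) := by gcongr
      _ = ENNReal.ofReal ((3/2:ℝ) ^ d * (2:ℝ) ^ (-(d:ℝ))) * J := by
          rw [ENNReal.ofReal_mul (by positivity), ENNReal.ofReal_pow (by norm_num), hcdef, mul_assoc]
      _ = ENNReal.ofReal ((3/4:ℝ) ^ d) * J := by
          congr 2
          rw [Real.rpow_neg (by norm_num), Real.rpow_natCast]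
          rw [show ((3:ℝ)/4) = (3/2)/2 by norm_num, div_pow]
          field_simp
          rw [div_pow, ← pow_mul, ← pow_mul, mul_comm 2 d]; field_simp
      _ ≤ ENNReal.ofReal (3/4) * J := by
          gcongr
          calc ((3:ℝ)/4) ^ d ≤ (3/4) ^ 1 := by
                apply pow_le_pow_of_le_one (by norm_num) (by norm_num) hd
            _ = 3/4 := pow_one _
  have : J < J := lt_of_le_of_lt hchain (by
    calc ENNReal.ofReal (3/4) * J < 1 * J := by
          refine ENNReal.mul_lt_mul_left hJ0 hJtop ?_
          exact ENNReal.ofReal_lt_one.2 (by norm_num)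
      _ = J := one_mul J)
  exact absurd this (lt_irrefl J)
end

section
/- (Observability for spectral clusters from uniform observability of the Schrödinger flow) Let H be a self-adjoint Schrödinger operator H = -Δ + V on L^2(T^d) with V ∈ L^∞, S ⊂ T^d measurable, T > 0, and suppose the observability inequality ‖g‖²_{L²(T^d)} ≤ C ∫_0^T ‖e^{-itH}g‖²_{L²(S)} dt holds for all g ∈ L²(T^d). Suppose also the eigenvalue counting bound #{k : E_k ∈ [E-w, E]} ≤ C_d² E^{d/2} holds. Then for every E > 0 and every w ≤ (1/4)(C_d² C T³ E^{d/2})^{-1/2}, every finite linear combination f = Σ_{E-w ≤ E_k ≤ E} α_k ψ_k of normalized eigenfunctions ψ_k of H with eigenvalues E_k ∈ [E-w, E] satisfies ‖f‖²_{L²(T^d)} ≤ 4CT ‖f‖²_{L²(S)}. -/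
/-!
On the spectral window `[E - w, E]` the propagator acts, up to the global phase `e^{-itE}`, by
multipliers `e^{-it(E_k - E)}` that stay within `T w` of `1` for `t ∈ [0, T]`. By orthogonality of
the eigenfunctions, `‖e^{-itH} f - e^{-itE} f‖ ≤ T w ‖f‖`, so the observed energy
`‖R e^{-itH} f‖²` is at most `2 (T w ‖f‖)² + 2 ‖R f‖²`. Integrating over `[0, T]` and applying
observability gives `‖f‖² ≤ 2 C T³ w² ‖f‖² + 2 C T ‖R f‖²`. As soon as the window contains an
eigenvalue, the counting bound gives `C_d² E^{d/2} ≥ 1`, so the smallness condition on `w` forces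
`C T³ w² ≤ 1/16` and the first term is absorbed.
-/

open MeasureTheory Complex

theorem norm_exp_neg_I_mul_sub_exp_neg_I_mul_le (t a b : ℝ) :
    ‖exp (-(I * t * a)) - exp (-(I * t * b))‖ ≤ |t| * |a - b| := by
  have hfactor : exp (-(I * t * a)) - exp (-(I * t * b))
      = exp (-(I * t * b)) * (exp (I * ↑(t * (b - a))) - 1) := by
    rw [mul_sub, ← Complex.exp_add]; push_cast; ring_nf
  have hunit : ‖exp (-(I * t * b))‖ = 1 := by
    rw [norm_exp]; simp
  calc ‖exp (-(I * t * a)) - exp (-(I * t * b))‖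
      = ‖exp (I * ↑(t * (b - a))) - 1‖ := by rw [hfactor, norm_mul, hunit, one_mul]
    _ ≤ ‖t * (b - a)‖ := Real.norm_exp_I_mul_ofReal_sub_one_le
    _ = |t| * |a - b| := by rw [Real.norm_eq_abs, abs_mul, abs_sub_comm]

theorem mul_sq_le_of_le_mul_rpow_neg_half {B w : ℝ} (hB : 0 ≤ B) (hw : 0 ≤ w)
    (h : w ≤ 1 / 4 * B ^ (-(1 : ℝ) / 2)) : B * w ^ 2 ≤ 1 / 16 := by
  have hroot : B ^ (-(1 : ℝ) / 2) = (√B)⁻¹ := by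
    rw [neg_div, Real.rpow_neg hB, Real.sqrt_eq_rpow]
  have hmul : w * √B ≤ 1 / 4 :=
    calc w * √B ≤ 1 / 4 * ((√B)⁻¹ * √B) := by rw [← mul_assoc, ← hroot]; gcongr
      _ ≤ 1 / 4 := mul_le_of_le_one_right (by norm_num) inv_mul_le_one
  calc B * w ^ 2 = (w * √B) ^ 2 := by rw [mul_pow, Real.sq_sqrt hB, mul_comm]
    _ ≤ (1 / 4) ^ 2 := by gcongr
    _ = 1 / 16 := by norm_num

theorem mul_pow_three_mul_sq_le_of_le {Cd C T X w : ℝ} (hX : 1 ≤ Cd ^ 2 * X) (hC : 0 ≤ C)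
    (hT : 0 ≤ T) (hw : 0 ≤ w) (h : w ≤ 1 / 4 * (Cd ^ 2 * C * T ^ 3 * X) ^ (-(1 : ℝ) / 2)) :
    C * T ^ 3 * w ^ 2 ≤ 1 / 16 := by
  have hsplit : Cd ^ 2 * C * T ^ 3 * X = (Cd ^ 2 * X) * (C * T ^ 3) := by ring
  calc C * T ^ 3 * w ^ 2 ≤ (Cd ^ 2 * X) * (C * T ^ 3 * w ^ 2) :=
        le_mul_of_one_le_left (by positivity) hX
    _ = (Cd ^ 2 * C * T ^ 3 * X) * w ^ 2 := by ring
    _ ≤ 1 / 16 := mul_sq_le_of_le_mul_rpow_neg_half (by rw [hsplit]; positivity) hw h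

theorem intervalIntegral_le_mul_of_abs_le {F : ℝ → ℝ} {K T : ℝ} (hT : 0 ≤ T)
    (hF : ∀ t ∈ Set.Ioc 0 T, |F t| ≤ K) : ∫ t in 0..T, F t ≤ K * T := by
  have hnorm := intervalIntegral.norm_integral_le_of_norm_le_const (a := 0) (b := T) (f := F)
    (by rwa [Set.uIoc_of_le hT])
  rw [sub_zero, abs_of_nonneg hT] at hnorm
  exact (le_abs_self _).trans hnorm

section Orthonormal

variable {𝕜 E ι : Type*} [RCLike 𝕜] [NormedAddCommGroup E] [InnerProductSpace 𝕜 E] [Fintype ι]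
  {v : ι → E}

theorem Orthonormal.norm_sum_smul_sq (hv : Orthonormal 𝕜 v) (c : ι → 𝕜) :
    ‖∑ i, c i • v i‖ ^ 2 = ∑ i, ‖c i‖ ^ 2 := by
  simpa using hv.orthogonalFamily.norm_sum c Finset.univ

theorem Orthonormal.norm_sum_mul_smul_le (hv : Orthonormal 𝕜 v) {m : ι → 𝕜} {M : ℝ}
    (hM : 0 ≤ M) (hm : ∀ i, ‖m i‖ ≤ M) (c : ι → 𝕜) :
    ‖∑ i, (m i * c i) • v i‖ ≤ M * ‖∑ i, c i • v i‖ := by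
  refine (pow_le_pow_iff_left₀ (norm_nonneg _) (by positivity) two_ne_zero).mp ?_
  rw [mul_pow, hv.norm_sum_smul_sq, hv.norm_sum_smul_sq, Finset.mul_sum]
  gcongr with i
  rw [norm_mul, mul_pow]
  gcongr
  exact hm i

end Orthonormal

section Propagator

variable {E F ι : Type*} [NormedAddCommGroup E] [InnerProductSpace ℂ E]
  [NormedAddCommGroup F] [NormedSpace ℂ F] [Fintype ι]
  {U : ℝ → E →L[ℂ] E} {v : ι → E} {e : ι → ℝ}

theorem propagator_apply_sum (hU : ∀ t i, U t (v i) = exp (-(I * t * e i)) • v i)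
    (t : ℝ) (c : ι → ℂ) :
    U t (∑ i, c i • v i) = ∑ i, (exp (-(I * t * e i)) * c i) • v i := by
  rw [map_sum]
  refine Finset.sum_congr rfl fun i _ => ?_
  rw [map_smul, hU, smul_smul, mul_comm]

theorem norm_propagator_sub_exp_smul_le (hv : Orthonormal ℂ v)
    (hU : ∀ t i, U t (v i) = exp (-(I * t * e i)) • v i) {E₀ w : ℝ} (hw : 0 ≤ w)
    (he : ∀ i, |e i - E₀| ≤ w) (t : ℝ) (c : ι → ℂ) :
    ‖U t (∑ i, c i • v i) - exp (-(I * t * E₀)) • ∑ i, c i • v i‖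
      ≤ |t| * w * ‖∑ i, c i • v i‖ := by
  have hdiff : U t (∑ i, c i • v i) - exp (-(I * t * E₀)) • ∑ i, c i • v i
      = ∑ i, ((exp (-(I * t * e i)) - exp (-(I * t * E₀))) * c i) • v i := by
    rw [propagator_apply_sum hU, Finset.smul_sum, ← Finset.sum_sub_distrib]
    refine Finset.sum_congr rfl fun i _ => ?_
    rw [smul_smul, ← sub_smul, sub_mul]
  rw [hdiff]
  refine hv.norm_sum_mul_smul_le (by positivity) (fun i => ?_) c
  exact (norm_exp_neg_I_mul_sub_exp_neg_I_mul_le t _ _).trans (by gcongr; exact he i)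

theorem norm_sq_observed_propagator_le {R : E →L[ℂ] F} (hR : ‖R‖ ≤ 1) (hv : Orthonormal ℂ v)
    (hU : ∀ t i, U t (v i) = exp (-(I * t * e i)) • v i) {E₀ w : ℝ} (hw : 0 ≤ w)
    (he : ∀ i, |e i - E₀| ≤ w) (t : ℝ) (c : ι → ℂ) :
    ‖R (U t (∑ i, c i • v i))‖ ^ 2
      ≤ 2 * ((|t| * w * ‖∑ i, c i • v i‖) ^ 2 + ‖R (∑ i, c i • v i)‖ ^ 2) := by
  set f := ∑ i, c i • v i
  set u := exp (-(I * t * E₀))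
  have hu : ‖u‖ = 1 := by rw [norm_exp]; simp
  have htri : ‖R (U t f)‖ ≤ |t| * w * ‖f‖ + ‖R f‖ :=
    calc ‖R (U t f)‖ = ‖R (U t f - u • f) + u • R f‖ := by rw [map_sub, map_smul, sub_add_cancel]
      _ ≤ ‖R (U t f - u • f)‖ + ‖R f‖ :=
          (norm_add_le _ _).trans_eq (by rw [norm_smul, hu, one_mul])
      _ ≤ ‖U t f - u • f‖ + ‖R f‖ := by
          gcongr; simpa using R.le_of_opNorm_le hR (U t f - u • f)
      _ ≤ |t| * w * ‖f‖ + ‖R f‖ := by gcongr; exact norm_propagator_sub_exp_smul_le hv hU hw he t c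
  exact (pow_le_pow_left₀ (norm_nonneg _) htri 2).trans add_sq_le

end Propagator

theorem stmt_17_general {H H' : Type*} [NormedAddCommGroup H] [InnerProductSpace ℂ H]
    [NormedAddCommGroup H'] [InnerProductSpace ℂ H']
    (d : ℕ) (U : ℝ → H →L[ℂ] H) (R : H →L[ℂ] H') (hR : ‖R‖ ≤ 1)
    (C T Cd E w : ℝ) (hT : 0 < T) (hC : 0 ≤ C)
    (hobs : ∀ g : H, ‖g‖ ^ 2 ≤ C * ∫ t in (0 : ℝ)..T, ‖R (U t g)‖ ^ 2)
    (N : ℕ) (ψ : Fin N → H) (horth : Orthonormal ℂ ψ)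
    (Ek : Fin N → ℝ) (hEk : ∀ k, Ek k ∈ Set.Icc (E - w) E)
    (hU : ∀ (t : ℝ) (k : Fin N),
      U t (ψ k) = Complex.exp (-(Complex.I * (t : ℂ) * (Ek k : ℂ))) • ψ k)
    (hcount : (N : ℝ) ≤ Cd ^ 2 * E ^ ((d : ℝ) / 2))
    (hwsmall : w ≤ (1 / 4) * (Cd ^ 2 * C * T ^ 3 * E ^ ((d : ℝ) / 2)) ^ (-(1 : ℝ) / 2)) :
    ∀ α : Fin N → ℂ,
      ‖∑ k, α k • ψ k‖ ^ 2 ≤ 4 * C * T * ‖R (∑ k, α k • ψ k)‖ ^ 2 := by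
  intro α
  rcases isEmpty_or_nonempty (Fin N) with _ | ⟨⟨k₀⟩⟩
  · simp
  have hw : 0 ≤ w := (sub_le_self_iff E).mp ((hEk k₀).1.trans (hEk k₀).2)
  have hdist : ∀ k, |Ek k - E| ≤ w := fun k =>
    abs_sub_le_iff.mpr ⟨by linarith [(hEk k).2], by linarith [(hEk k).1]⟩
  have hsmall : C * T ^ 3 * w ^ 2 ≤ 1 / 16 :=
    mul_pow_three_mul_sq_le_of_le (le_trans (Nat.one_le_cast.mpr k₀.pos) hcount) hC hT.le hw
      hwsmall
  set f := ∑ k, α k • ψ k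
  have hpoint : ∀ t ∈ Set.Ioc 0 T, |‖R (U t f)‖ ^ 2| ≤ 2 * ((T * w * ‖f‖) ^ 2 + ‖R f‖ ^ 2) := by
    intro t ht
    rw [abs_of_nonneg (by positivity)]
    refine (norm_sq_observed_propagator_le hR horth hU hw hdist t α).trans ?_
    have htT : |t| ≤ T := (abs_of_pos ht.1).trans_le ht.2
    gcongr
  have hobsf : ‖f‖ ^ 2 ≤ 2 * (C * T ^ 3 * w ^ 2) * ‖f‖ ^ 2 + 2 * C * T * ‖R f‖ ^ 2 :=
    calc ‖f‖ ^ 2 ≤ C * ∫ t in (0 : ℝ)..T, ‖R (U t f)‖ ^ 2 := hobs f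
      _ ≤ C * (2 * ((T * w * ‖f‖) ^ 2 + ‖R f‖ ^ 2) * T) :=
          mul_le_mul_of_nonneg_left (intervalIntegral_le_mul_of_abs_le hT.le hpoint) hC
      _ = 2 * (C * T ^ 3 * w ^ 2) * ‖f‖ ^ 2 + 2 * C * T * ‖R f‖ ^ 2 := by ring
  have hobserved : 0 ≤ C * T * ‖R f‖ ^ 2 := by positivity
  linarith [mul_le_mul_of_nonneg_right hsmall (sq_nonneg ‖f‖)]

/-- Observability for spectral clusters from uniform observability of the Schrödinger flow:
if `‖g‖² ≤ C ∫_0^T ‖R(U_t g)‖² dt` for all `g` (with `U_t` the propagator, `R` the restriction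
operator with `‖R‖ ≤ 1`), the eigenvalue counting bound `N ≤ C_d² E^{d/2}` holds, and
`w ≤ (1/4)(C_d² C T³ E^{d/2})^{-1/2}`, then every combination `f = Σ α_k ψ_k` of orthonormal
eigenfunctions with eigenvalues in `[E-w, E]` satisfies `‖f‖² ≤ 4CT ‖Rf‖²`. -/
theorem stmt_17 {H H' : Type*} [NormedAddCommGroup H] [InnerProductSpace ℂ H]
    [NormedAddCommGroup H'] [InnerProductSpace ℂ H']
    (d : ℕ) (U : ℝ → H →L[ℂ] H) (R : H →L[ℂ] H') (hR : ‖R‖ ≤ 1)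
    (C T Cd E w : ℝ) (hT : 0 < T) (hC : 0 ≤ C) (hE : 0 < E) (hw : 0 ≤ w)
    (hobs : ∀ g : H, ‖g‖ ^ 2 ≤ C * ∫ t in (0 : ℝ)..T, ‖R (U t g)‖ ^ 2)
    (N : ℕ) (ψ : Fin N → H) (horth : Orthonormal ℂ ψ)
    (Ek : Fin N → ℝ) (hEk : ∀ k, Ek k ∈ Set.Icc (E - w) E)
    (hU : ∀ (t : ℝ) (k : Fin N),
      U t (ψ k) = Complex.exp (-(Complex.I * (t : ℂ) * (Ek k : ℂ))) • ψ k)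
    (hcount : (N : ℝ) ≤ Cd ^ 2 * E ^ ((d : ℝ) / 2))
    (hwsmall : w ≤ (1 / 4) * (Cd ^ 2 * C * T ^ 3 * E ^ ((d : ℝ) / 2)) ^ (-(1 : ℝ) / 2)) :
    ∀ α : Fin N → ℂ,
      ‖∑ k, α k • ψ k‖ ^ 2 ≤ 4 * C * T * ‖R (∑ k, α k • ψ k)‖ ^ 2 :=
  stmt_17_general d U R hR C T Cd E w hT hC hobs N ψ horth Ek hEk hU hcount hwsmall
end
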